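/- For every integer k ≥ 1 there exists a (k+2, k) systematic single-error-correcting code, i.e., a code C ⊆ S_{k+2} of size k! such that for every σ ∈ S_k there is exactly one α ∈ C with α_{↓k} = σ, and distinct codewords of C have Kendall τ-distance at least 3. -/

import Mathlib

/-!
Each `σ ∈ S_k` is encoded by inserting `k + 1` and `k + 2` at the positions that make their
inversion counts equal to the check sums `∑ ψᵢ(σ) mod (k + 1)` and `∑ i ψᵢ(σ) mod (k + 2)`,
where `ψ(σ)` is the inversion vector of `σ`. An adjacent transposition changes the inversion
vector in one entry by one, so the Kendall distance dominates the ℓ¹ distance of inversion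
vectors. Distinct `σ, π ∈ S_k` have distinct inversion vectors (supported on `2, …, k`). If
these are at ℓ¹ distance 1, both check sums differ; if at distance 2, one of them does: the
plain sum catches `±2eⱼ` and `±(eⱼ + eₘ)`, the weighted sum catches `±(eⱼ - eₘ)` because
`0 < |j - m| < k + 2`. Hence the codewords are at Kendall distance at least 3.
-/

/-- `AdjTrans σ π` : the sequence `π` is obtained from the sequence `σ` by exchanging
two distinct adjacent elements (an adjacent transposition). -/
def AdjTrans (σ π : List ℤ) : Prop :=
  ∃ (l₁ l₂ : List ℤ) (a b : ℤ), a ≠ b ∧ σ = l₁ ++ a :: b :: l₂ ∧ π = l₁ ++ b :: a :: l₂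

/-- `StepsTo n σ π` : `π` can be obtained from `σ` by a sequence of `n` adjacent
transpositions. -/
def StepsTo : ℕ → List ℤ → List ℤ → Prop
  | 0 => fun σ π => σ = π
  | n + 1 => fun σ π => ∃ τ, AdjTrans σ τ ∧ StepsTo n τ π

/-- The Kendall τ-distance between two sequences: the minimum number of adjacent
transpositions needed to transform one into the other. -/
noncomputable def dK (σ π : List ℤ) : ℕ := sInf {n | StepsTo n σ π}

/-- The list `[a, a+1, ..., a+len-1]` of integers. -/
def rangeList (a len : ℕ) : List ℤ := (List.range' a len).map (fun x => (x : ℤ))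

/-- The substitution map `T_θ`: the `r`-th occurrence (from the left, `0`-indexed) of a
rank `a` in `σ` is replaced by the `r`-th entry of the list `θ a`. -/
def Tmap (θ : ℤ → List ℤ) (σ : List ℤ) : List ℤ :=
  (List.range σ.length).map (fun j =>
    (θ (σ.getD j 0)).getD ((σ.take j).count (σ.getD j 0)) 0)

/-- `psiEntry σ a s` : the number of positions in `σ` strictly to the right of the `s`-th
occurrence (`0`-indexed) of `a` in `σ` that hold an element smaller than `a`. -/
def psiEntry (σ : List ℤ) (a : ℤ) (s : ℕ) : ℕ :=
  (σ.drop (((σ.indexesOf a).getD s σ.length) + 1)).countP (fun x => decide (x < a))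

/-- The Manhattan distance between two vectors of naturals (presented as lists). -/
def manhattanL (x y : List ℕ) : ℕ :=
  ∑ i ∈ Finset.range (max x.length y.length), ((x.getD i 0 : ℤ) - (y.getD i 0 : ℤ)).natAbs

/-- The Lee distance over `Z_q` between two vectors with entries in `{0, …, q-1}`
(presented as lists). -/
def leeDistL (q : ℕ) (x y : List ℕ) : ℕ :=
  ∑ i ∈ Finset.range (max x.length y.length),
    min (((x.getD i 0 : ℤ) - (y.getD i 0 : ℤ)).natAbs)
      (q - ((x.getD i 0 : ℤ) - (y.getD i 0 : ℤ)).natAbs)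

/-- The Lee distance between two vectors over `ZMod q`. -/
def zmodLee {q N : ℕ} (x y : Fin N → ZMod q) : ℕ :=
  ∑ i, min (x i - y i).val (y i - x i).val

/-- `permList k σ` : `σ` is (an ordering representing) a permutation of `{1, …, k}`. -/
def permList (k : ℕ) (σ : List ℤ) : Prop :=
  (↑σ : Multiset ℤ) = (↑(rangeList 1 k) : Multiset ℤ)

/-- The multiset `M_{k,r} = {0^k, k+1, …, k+r}`. -/
def Mkr (k r : ℕ) : Multiset ℤ :=
  Multiset.replicate k (0 : ℤ) + (↑(rangeList (k + 1) r) : Multiset ℤ)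

/-- `α_{↓k}` : delete from `α` all elements larger than `k`. -/
def restrictTo (k : ℕ) (α : List ℤ) : List ℤ :=
  α.filter (fun x => decide (x ≤ (k : ℤ)))

/-- `α_{k↦0}` : replace in `α` every element of `{1, …, k}` by `0`. -/
def mapToZero (k : ℕ) (α : List ℤ) : List ℤ :=
  α.map (fun x => if 1 ≤ x ∧ x ≤ (k : ℤ) then 0 else x)

/-- `star σ ρ = σ ∗ ρ` : replace the zeros of `ρ`, from left to right, by the elements
of `σ` in order. -/
def starP : List ℤ → List ℤ → List ℤ
  | _, [] => []
  | σ, x :: ρ' => if x = 0 then σ.headD 0 :: starP σ.tail ρ' else x :: starP σ ρ'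

open Finset

lemma List.insertIdx_eq_take_append_drop {α : Type*} {l : List α} {i : ℕ} (hi : i ≤ l.length)
    (x : α) : l.insertIdx i x = l.take i ++ x :: l.drop i := by
  induction l generalizing i with
  | nil => simp_all
  | cons y l ih =>
    cases i with
    | zero => simp
    | succ i => simp [List.insertIdx_succ_cons, ih (by simpa using hi)]

lemma List.filter_insertIdx_of_neg {α : Type*} {p : α → Bool} {x : α} (hx : p x = false)
    {l : List α} {i : ℕ} (hi : i ≤ l.length) : (l.insertIdx i x).filter p = l.filter p := by
  rw [List.insertIdx_eq_take_append_drop hi, List.filter_append, List.filter_cons_of_neg (by simpa),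
    ← List.filter_append, List.take_append_drop]

section InvCount

variable {α : Type*} [LinearOrder α]

/-- For a list without repetitions this is the entry at `a` of its inversion vector. -/
def invCount (a : α) : List α → ℕ
  | [] => 0
  | x :: xs => (if x = a then xs.countP (· < a) else 0) + invCount a xs

@[simp]
lemma invCount_nil (a : α) : invCount a [] = 0 := rfl

lemma invCount_cons (a x : α) (xs : List α) :
    invCount a (x :: xs) = (if x = a then xs.countP (· < a) else 0) + invCount a xs := rfl

lemma invCount_append (a : α) (l₁ l₂ : List α) :
    invCount a (l₁ ++ l₂) =
      invCount a l₁ + l₁.count a * l₂.countP (· < a) + invCount a l₂ := by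
  induction l₁ with
  | nil => simp
  | cons x l₁ ih =>
    by_cases hx : x = a
    · simp [invCount_cons, ih, List.countP_append, hx]
      ring
    · simp [invCount_cons, ih, hx]

lemma invCount_eq_zero_of_not_mem {a : α} {l : List α} (h : a ∉ l) : invCount a l = 0 := by
  induction l with
  | nil => rfl
  | cons x xs ih =>
    rw [List.mem_cons, not_or] at h
    simp [invCount_cons, Ne.symm h.1, ih h.2]

lemma invCount_eq_zero_of_forall_le {a : α} {l : List α} (h : ∀ x ∈ l, a ≤ x) :
    invCount a l = 0 := by
  induction l with
  | nil => rfl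
  | cons x xs ih =>
    have hxs : xs.countP (· < a) = 0 :=
      List.countP_eq_zero.2 fun y hy => by simpa using h y (List.mem_cons_of_mem x hy)
    simp [invCount_cons, hxs, ih fun y hy => h y (List.mem_cons_of_mem x hy)]

lemma invCount_middle_of_lt {a w : α} (h : a < w) (l₁ l₂ : List α) :
    invCount a (l₁ ++ w :: l₂) = invCount a (l₁ ++ l₂) := by
  simp [invCount_append, invCount_cons, h.ne', not_lt.2 h.le]

lemma invCount_middle_self {w : α} {l₁ l₂ : List α} (h : ∀ x ∈ l₁ ++ l₂, x < w) :
    invCount w (l₁ ++ w :: l₂) = l₂.length := by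
  have hw : w ∉ l₁ ++ l₂ := fun hw => lt_irrefl w (h w hw)
  rw [List.mem_append, not_or] at hw
  have hl₂ : l₂.countP (· < w) = l₂.length :=
    List.countP_eq_length.2 fun x hx => by simpa using h x (List.mem_append_right l₁ hx)
  simp [invCount_append, invCount_cons, invCount_eq_zero_of_not_mem hw.1,
    invCount_eq_zero_of_not_mem hw.2, List.count_eq_zero_of_not_mem hw.1, hl₂]

/-- A repetition-free list is determined by its set of entries and its inversion vector:
its maximum `m` sits exactly `invCount m` places from the end, and deleting it changes no
other entry of the inversion vector. -/
theorem eq_of_perm_of_invCount_eq {σ π : List α} (hσ : σ.Nodup) (hσπ : σ.Perm π)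
    (h : ∀ a ∈ σ, invCount a σ = invCount a π) : σ = π := by
  induction hn : σ.length generalizing σ π with
  | zero =>
    rw [List.length_eq_zero_iff] at hn
    subst hn
    exact hσπ.nil_eq
  | succ n ih =>
    obtain ⟨m, hm, hmax⟩ := σ.toFinset.exists_max_image id
      (List.toFinset_nonempty_iff σ |>.2 (List.ne_nil_of_length_eq_add_one hn))
    rw [List.mem_toFinset] at hm
    obtain ⟨s₁, s₂, rfl⟩ := List.append_of_mem hm
    obtain ⟨t₁, t₂, rfl⟩ := List.append_of_mem (hσπ.subset hm)
    have hperm : (s₁ ++ s₂).Perm (t₁ ++ t₂) :=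
      (List.perm_middle.symm.trans (hσπ.trans List.perm_middle)).cons_inv
    have hnodup := List.nodup_middle.1 hσ
    have hlt : ∀ x ∈ s₁ ++ s₂, x < m := fun x hx =>
      lt_of_le_of_ne (hmax x (by simp_all)) fun hxm => (List.nodup_cons.1 hnodup).1 (hxm ▸ hx)
    have hlt' : ∀ x ∈ t₁ ++ t₂, x < m := fun x hx => hlt x (hperm.symm.subset hx)
    have hrest : s₁ ++ s₂ = t₁ ++ t₂ := by
      refine ih (List.nodup_cons.1 hnodup).2 hperm (fun a ha => ?_) (by simp at hn ⊢; omega)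
      rw [← invCount_middle_of_lt (hlt a ha) s₁ s₂, ← invCount_middle_of_lt (hlt a ha) t₁ t₂]
      exact h a (by simp at ha ⊢; tauto)
    have hlen : s₂.length = t₂.length := by
      rw [← invCount_middle_self hlt, ← invCount_middle_self hlt', h m hm]
    obtain ⟨rfl, rfl⟩ := List.append_inj' hrest hlen
    rfl

lemma invCount_insertIdx_of_lt {a w : α} (h : a < w) {l : List α} {i : ℕ} (hi : i ≤ l.length) :
    invCount a (l.insertIdx i w) = invCount a l := by
  rw [List.insertIdx_eq_take_append_drop hi, invCount_middle_of_lt h, List.take_append_drop]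

lemma invCount_insertIdx_self {w : α} {l : List α} (h : ∀ x ∈ l, x < w) {i : ℕ}
    (hi : i ≤ l.length) : invCount w (l.insertIdx i w) = l.length - i := by
  rw [List.insertIdx_eq_take_append_drop hi, invCount_middle_self (by simpa using h),
    List.length_drop]

end InvCount

def invDist (A : Finset ℤ) (σ π : List ℤ) : ℕ :=
  ∑ a ∈ A, ((invCount a σ : ℤ) - invCount a π).natAbs

lemma invDist_triangle (A : Finset ℤ) (σ τ π : List ℤ) :
    invDist A σ π ≤ invDist A σ τ + invDist A τ π := by
  rw [invDist, invDist, invDist, ← Finset.sum_add_distrib]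
  exact Finset.sum_le_sum fun a _ => by omega

lemma invCount_pair (a u v : ℤ) : invCount a [u, v] = if u = a ∧ v < a then 1 else 0 := by
  by_cases hu : u = a <;> by_cases hv : v < a <;> simp [invCount_cons, hu, hv]

lemma invCount_swap (a u v : ℤ) (l₁ l₂ : List ℤ) :
    (invCount a (l₁ ++ u :: v :: l₂) : ℤ) - invCount a (l₁ ++ v :: u :: l₂) =
      (invCount a [u, v] : ℤ) - invCount a [v, u] := by
  have hswap : ∀ x y : ℤ, x :: y :: l₂ = [x, y] ++ l₂ := fun _ _ => rfl
  rw [hswap u v, hswap v u]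
  simp only [invCount_append, List.countP_append, List.count_cons, List.countP_cons,
    List.count_nil, List.countP_nil]
  push_cast
  ring

lemma AdjTrans.invDist_le_one (A : Finset ℤ) {σ π : List ℤ} (h : AdjTrans σ π) :
    invDist A σ π ≤ 1 := by
  obtain ⟨l₁, l₂, u, v, huv, rfl, rfl⟩ := h
  calc invDist A (l₁ ++ u :: v :: l₂) (l₁ ++ v :: u :: l₂)
      ≤ ∑ a ∈ A, if a = max u v then 1 else 0 := by
        refine Finset.sum_le_sum fun a _ => ?_
        rw [invCount_swap, invCount_pair, invCount_pair]
        rcases lt_or_gt_of_ne huv with huv | huv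
        · simp only [max_eq_right huv.le]
          split_ifs <;> omega
        · simp only [max_eq_left huv.le]
          split_ifs <;> omega
    _ ≤ 1 := by
      rw [Finset.sum_ite_eq']
      split_ifs <;> simp

lemma StepsTo.invDist_le (A : Finset ℤ) {n : ℕ} {σ π : List ℤ} (h : StepsTo n σ π) :
    invDist A σ π ≤ n := by
  induction n generalizing σ with
  | zero =>
    subst h
    simp [invDist]
  | succ n ih =>
    obtain ⟨τ, hστ, hτπ⟩ := h
    have := invDist_triangle A σ τ π
    have := hστ.invDist_le_one A
    have := ih hτπ
    omega

lemma stepsTo_cons (x : ℤ) {n : ℕ} {σ π : List ℤ} (h : StepsTo n σ π) :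
    StepsTo n (x :: σ) (x :: π) := by
  induction n generalizing σ with
  | zero => exact congrArg (x :: ·) h
  | succ n ih =>
    obtain ⟨τ, ⟨l₁, l₂, a, b, hab, rfl, rfl⟩, hτπ⟩ := h
    exact ⟨x :: (l₁ ++ b :: a :: l₂), ⟨x :: l₁, l₂, a, b, hab, rfl, rfl⟩, ih hτπ⟩

lemma StepsTo.trans {m n : ℕ} {σ τ π : List ℤ} (h₁ : StepsTo m σ τ) (h₂ : StepsTo n τ π) :
    StepsTo (m + n) σ π := by
  induction m generalizing σ with
  | zero =>
    subst h₁
    simpa using h₂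
  | succ m ih =>
    obtain ⟨ρ, hσρ, hρτ⟩ := h₁
    rw [Nat.add_right_comm]
    exact ⟨ρ, hσρ, ih hρτ⟩

lemma List.Perm.exists_stepsTo {σ π : List ℤ} (h : σ.Perm π) (hσ : σ.Nodup) :
    ∃ n, StepsTo n σ π := by
  induction h with
  | nil => exact ⟨0, rfl⟩
  | cons x _ ih =>
    obtain ⟨n, hn⟩ := ih (List.nodup_cons.1 hσ).2
    exact ⟨n, stepsTo_cons x hn⟩
  | swap x y l =>
    have hxy : y ≠ x := fun h => (List.nodup_cons.1 hσ).1 (h ▸ List.mem_cons_self)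
    exact ⟨1, _, ⟨[], l, y, x, hxy, rfl, rfl⟩, rfl⟩
  | trans h₁₂ _ ih₁ ih₂ =>
    obtain ⟨m, hm⟩ := ih₁ hσ
    obtain ⟨n, hn⟩ := ih₂ (h₁₂.nodup_iff.1 hσ)
    exact ⟨m + n, hm.trans hn⟩

lemma invDist_le_dK (A : Finset ℤ) {σ π : List ℤ} (hσ : σ.Nodup) (h : σ.Perm π) :
    invDist A σ π ≤ dK σ π :=
  le_csInf (h.exists_stepsTo hσ) fun _ hn => hn.invDist_le A

lemma three_le_of_support_singleton {k j : ℕ} (hj : j ∈ Icc 2 k) {c : ℤ} (hc : c ≠ 0) {x y : ℕ}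
    (hx : x = 0 → ((k + 1 : ℕ) : ℤ) ∣ c) (hy : y = 0 → ((k + 2 : ℕ) : ℤ) ∣ j * c) :
    3 ≤ c.natAbs + x + y := by
  rw [mem_Icc] at hj
  have hx : c.natAbs ≤ 2 → 1 ≤ x := fun hc2 => Nat.pos_of_ne_zero fun hx0 =>
    hc (Int.eq_zero_of_dvd_of_natAbs_lt_natAbs (hx hx0) (by omega))
  have hy : c.natAbs = 1 → 1 ≤ y := fun hc1 => Nat.pos_of_ne_zero fun hy0 => by
    have := Int.eq_zero_of_dvd_of_natAbs_lt_natAbs (hy hy0) (by rw [Int.natAbs_mul, hc1]; omega)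
    exact hc ((mul_eq_zero.1 this).resolve_left (by omega))
  omega

lemma three_le_of_support_pair {k j m : ℕ} (hj : j ∈ Icc 2 k) (hm : m ∈ Icc 2 k) (hjm : j ≠ m)
    {c d : ℤ} (hc : c ≠ 0) (hd : d ≠ 0) {x y : ℕ}
    (hx : x = 0 → ((k + 1 : ℕ) : ℤ) ∣ c + d) (hy : y = 0 → ((k + 2 : ℕ) : ℤ) ∣ j * c + m * d) :
    3 ≤ c.natAbs + d.natAbs + x + y := by
  rw [mem_Icc] at hj hm
  by_contra! hlt
  -- `|c + d| ≤ 2 < k + 1` forces `d = -c`, and then the weighted check sees `(j - m) * c`.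
  have hd : d = -c := by
    by_contra hcd
    have hx0 : x = 0 := by omega
    exact hcd (by linarith [Int.eq_zero_of_dvd_of_natAbs_lt_natAbs (hx hx0) (by omega)])
  subst hd
  have hy0 : y = 0 := by omega
  have hdiff : (j : ℤ) * c + m * -c = (j - m) * c := by ring
  rw [hdiff] at hy
  have := Int.eq_zero_of_dvd_of_natAbs_lt_natAbs (hy hy0)
    (by rw [Int.natAbs_mul, show c.natAbs = 1 by omega]; omega)
  simp_all [sub_eq_zero]

/-- The check sums `∑ e i` modulo `k + 1` and `∑ i * e i` modulo `k + 2` detect every nonzero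
`e` supported on `[2, k]` of ℓ¹ norm at most 2, and detect those of norm 1 twice: `x` and `y`
stand for the distances contributed by the two check symbols. -/
lemma three_le_natAbs_sum_add {k : ℕ} {e : ℕ → ℤ} (he : ∃ j ∈ Icc 2 k, e j ≠ 0) {x y : ℕ}
    (hx : x = 0 → ((k + 1 : ℕ) : ℤ) ∣ ∑ i ∈ Icc 2 k, e i)
    (hy : y = 0 → ((k + 2 : ℕ) : ℤ) ∣ ∑ i ∈ Icc 2 k, (i : ℤ) * e i) :
    3 ≤ ∑ i ∈ Icc 2 k, (e i).natAbs + x + y := by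
  have sums_eq_zero : ∀ s : Finset ℕ, (∀ i ∈ s, e i = 0) → ∑ i ∈ s, (e i).natAbs = 0 ∧
      ∑ i ∈ s, e i = 0 ∧ ∑ i ∈ s, (i : ℤ) * e i = 0 := fun s hs =>
    ⟨sum_eq_zero fun i hi => by simp [hs i hi], sum_eq_zero hs,
      sum_eq_zero fun i hi => by simp [hs i hi]⟩
  obtain ⟨j, hj, hej⟩ := he
  rw [← add_sum_erase _ _ hj] at hx hy ⊢
  by_cases hsingle : ∀ i ∈ (Icc 2 k).erase j, e i = 0
  · obtain ⟨h₁, h₂, h₃⟩ := sums_eq_zero _ hsingle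
    rw [h₂, add_zero] at hx
    rw [h₃, add_zero] at hy
    simpa [h₁] using three_le_of_support_singleton hj hej hx hy
  obtain ⟨m, hm, hem⟩ : ∃ m ∈ (Icc 2 k).erase j, e m ≠ 0 := by
    push Not at hsingle
    exact hsingle
  rw [← add_sum_erase _ _ hm] at hx hy ⊢
  by_cases hpair : ∀ i ∈ ((Icc 2 k).erase j).erase m, e i = 0
  · obtain ⟨h₁, h₂, h₃⟩ := sums_eq_zero _ hpair
    rw [h₂, add_zero] at hx
    rw [h₃, add_zero] at hy
    have := three_le_of_support_pair hj (mem_of_mem_erase hm) (ne_of_mem_erase hm).symm hej hem hx hy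
    omega
  obtain ⟨p, hp, hep⟩ : ∃ p ∈ ((Icc 2 k).erase j).erase m, e p ≠ 0 := by
    push Not at hpair
    exact hpair
  have := single_le_sum (f := fun i => (e i).natAbs) (fun _ _ => Nat.zero_le _) hp
  have := Int.natAbs_pos.2 hej
  have := Int.natAbs_pos.2 hem
  have := Int.natAbs_pos.2 hep
  omega

/-- `rangeList` is elaborated through the list monad (the cast is applied by a monadic lift). -/
lemma rangeList_eq_map (a len : ℕ) : rangeList a len = (List.range' a len).map (↑) := by
  simpa [rangeList] using List.map_eq_flatMap.symm

lemma mem_rangeList {a len : ℕ} {x : ℤ} : x ∈ rangeList a len ↔ a ≤ x ∧ x < a + len := by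
  simp only [rangeList_eq_map, List.mem_map, List.mem_range'_1]
  constructor
  · rintro ⟨y, hy, rfl⟩
    omega
  · intro hx
    exact ⟨x.toNat, by omega, by omega⟩

lemma nodup_rangeList (a len : ℕ) : (rangeList a len).Nodup := by
  rw [rangeList_eq_map]
  exact (List.nodup_range' ..).map Nat.cast_injective

lemma rangeList_one_add_two (k : ℕ) :
    rangeList 1 (k + 2) = rangeList 1 k ++ [(k + 1 : ℤ), (k + 2 : ℤ)] := by
  simp only [rangeList_eq_map, List.range'_concat, List.map_append, List.append_assoc]
  simp only [List.map_cons, List.map_nil, List.cons_append, List.nil_append]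
  push_cast
  ring_nf

lemma permList_iff_perm {k : ℕ} {σ : List ℤ} : permList k σ ↔ σ.Perm (rangeList 1 k) :=
  Multiset.coe_eq_coe

section permList

variable {k : ℕ} {σ : List ℤ}

lemma bounds_of_permList (h : permList k σ) {x : ℤ} (hx : x ∈ σ) : 1 ≤ x ∧ x ≤ k := by
  have := mem_rangeList.1 ((permList_iff_perm.1 h).subset hx)
  omega

lemma nodup_of_permList (h : permList k σ) : σ.Nodup :=
  (permList_iff_perm.1 h).nodup_iff.2 (nodup_rangeList 1 k)

lemma length_of_permList (h : permList k σ) : σ.length = k := by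
  simp [(permList_iff_perm.1 h).length_eq, rangeList_eq_map]

lemma eq_of_permList_of_invCount_eq {π : List ℤ} (hσ : permList k σ) (hπ : permList k π)
    (h : ∀ i ∈ Icc 2 k, invCount (i : ℤ) σ = invCount (i : ℤ) π) : σ = π := by
  refine eq_of_perm_of_invCount_eq (nodup_of_permList hσ)
    ((permList_iff_perm.1 hσ).trans (permList_iff_perm.1 hπ).symm) fun a ha => ?_
  obtain ⟨ha₁, hak⟩ := bounds_of_permList hσ ha
  obtain rfl | ha₂ := ha₁.eq_or_lt
  · rw [invCount_eq_zero_of_forall_le fun x hx => (bounds_of_permList hσ hx).1,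
      invCount_eq_zero_of_forall_le fun x hx => (bounds_of_permList hπ hx).1]
  · simpa [Int.toNat_of_nonneg (by omega : 0 ≤ a)] using h a.toNat (mem_Icc.2 (by omega))

end permList

def invSum (k : ℕ) (σ : List ℤ) : ℕ := ∑ i ∈ Icc 2 k, invCount (i : ℤ) σ

def weightedInvSum (k : ℕ) (σ : List ℤ) : ℕ := ∑ i ∈ Icc 2 k, i * invCount (i : ℤ) σ

/-- The inversion counts of the two appended symbols `k + 1` and `k + 2` are the check sums
`invSum k σ % (k + 1)` and `weightedInvSum k σ % (k + 2)`. -/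
def codeword (k : ℕ) (σ : List ℤ) : List ℤ :=
  (σ.insertIdx (k - invSum k σ % (k + 1)) (k + 1)).insertIdx
    (k + 1 - weightedInvSum k σ % (k + 2)) (k + 2)

section codeword

variable {k : ℕ} {σ : List ℤ}

lemma length_insertIdx_codeword (h : permList k σ) :
    (σ.insertIdx (k - invSum k σ % (k + 1)) (k + 1)).length = k + 1 := by
  rw [List.length_insertIdx_of_le_length (by rw [length_of_permList h]; omega),
    length_of_permList h]

lemma permList_codeword (h : permList k σ) : permList (k + 2) (codeword k σ) := by
  rw [permList_iff_perm, rangeList_one_add_two]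
  have hcons : (codeword k σ).Perm ((k + 2 : ℤ) :: (k + 1 : ℤ) :: σ) :=
    (List.perm_insertIdx _ _ (by rw [length_insertIdx_codeword h]; omega)).trans
      ((List.perm_insertIdx _ _ (by rw [length_of_permList h]; omega)).cons _)
  have hrot : ((k + 2 : ℤ) :: (k + 1 : ℤ) :: σ).Perm (σ ++ [(k + 1 : ℤ), (k + 2 : ℤ)]) :=
    (List.Perm.swap _ _ σ).trans (List.perm_append_comm (l₁ := [(k + 1 : ℤ), (k + 2 : ℤ)]))
  exact hcons.trans (hrot.trans ((permList_iff_perm.1 h).append_right _))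

lemma restrictTo_codeword (h : permList k σ) : restrictTo k (codeword k σ) = σ := by
  rw [restrictTo, codeword,
    List.filter_insertIdx_of_neg (by simp) (by rw [length_insertIdx_codeword h]; omega),
    List.filter_insertIdx_of_neg (by simp) (by rw [length_of_permList h]; omega),
    List.filter_eq_self]
  exact fun x hx => by simpa using (bounds_of_permList h hx).2

lemma invCount_codeword_of_le {a : ℤ} (ha : a ≤ k) (h : permList k σ) :
    invCount a (codeword k σ) = invCount a σ := by
  rw [codeword, invCount_insertIdx_of_lt (by omega) (by rw [length_insertIdx_codeword h]; omega),
    invCount_insertIdx_of_lt (by omega) (by rw [length_of_permList h]; omega)]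

lemma invCount_codeword_succ (h : permList k σ) :
    invCount (k + 1 : ℤ) (codeword k σ) = invSum k σ % (k + 1) := by
  rw [codeword, invCount_insertIdx_of_lt (by omega) (by rw [length_insertIdx_codeword h]; omega),
    invCount_insertIdx_self (fun x hx => by have := bounds_of_permList h hx; omega)
      (by rw [length_of_permList h]; omega), length_of_permList h]
  have := Nat.mod_lt (invSum k σ) (by omega : 0 < k + 1)
  omega

lemma invCount_codeword_succ_succ (h : permList k σ) :
    invCount (k + 2 : ℤ) (codeword k σ) = weightedInvSum k σ % (k + 2) := by
  have hlt : ∀ x ∈ σ.insertIdx (k - invSum k σ % (k + 1)) (k + 1), x < k + 2 := fun x hx => by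
    rcases (List.mem_insertIdx (by rw [length_of_permList h]; omega)).1 hx with rfl | hx
    · omega
    · have := bounds_of_permList h hx
      omega
  rw [codeword, invCount_insertIdx_self hlt (by rw [length_insertIdx_codeword h]; omega),
    length_insertIdx_codeword h]
  have := Nat.mod_lt (weightedInvSum k σ) (by omega : 0 < k + 2)
  omega

end codeword

lemma invDist_codeword {k : ℕ} {σ π : List ℤ} (hσ : permList k σ) (hπ : permList k π) :
    invDist ((insert (k + 2) (insert (k + 1) (Icc 2 k))).map Nat.castEmbedding)
        (codeword k σ) (codeword k π) =
      ∑ i ∈ Icc 2 k, ((invCount (i : ℤ) σ : ℤ) - invCount (i : ℤ) π).natAbs +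
        ((invSum k σ % (k + 1) : ℕ) - (invSum k π % (k + 1) : ℕ) : ℤ).natAbs +
        ((weightedInvSum k σ % (k + 2) : ℕ) - (weightedInvSum k π % (k + 2) : ℕ) : ℤ).natAbs := by
  rw [invDist, sum_map, sum_insert (by simp), sum_insert (by simp)]
  simp only [Nat.castEmbedding_apply, Nat.cast_add, Nat.cast_one, Nat.cast_ofNat]
  rw [invCount_codeword_succ hσ, invCount_codeword_succ hπ, invCount_codeword_succ_succ hσ,
    invCount_codeword_succ_succ hπ,
    sum_congr rfl fun i hi => by
      rw [invCount_codeword_of_le (by simp at hi; omega) hσ,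
        invCount_codeword_of_le (by simp at hi; omega) hπ]]
  abel

lemma three_le_invDist_codeword {k : ℕ} {σ π : List ℤ} (hσ : permList k σ)
    (hπ : permList k π) (hne : σ ≠ π) :
    3 ≤ invDist ((insert (k + 2) (insert (k + 1) (Icc 2 k))).map Nat.castEmbedding)
      (codeword k σ) (codeword k π) := by
  rw [invDist_codeword hσ hπ]
  refine three_le_natAbs_sum_add ?_ (fun hx => ?_) (fun hy => ?_)
  · by_contra! heq
    exact hne (eq_of_permList_of_invCount_eq hσ hπ fun i hi => by
      simpa [sub_eq_zero] using heq i hi)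
  · have : invSum k π ≡ invSum k σ [MOD k + 1] := by
      simp only [Int.natAbs_eq_zero, sub_eq_zero, Nat.cast_inj] at hx
      exact hx.symm
    simpa [invSum, sum_sub_distrib] using this.dvd
  · have : weightedInvSum k π ≡ weightedInvSum k σ [MOD k + 2] := by
      simp only [Int.natAbs_eq_zero, sub_eq_zero, Nat.cast_inj] at hy
      exact hy.symm
    simpa [weightedInvSum, sum_sub_distrib, mul_sub] using this.dvd

lemma three_le_dK_codeword {k : ℕ} {σ π : List ℤ} (hσ : permList k σ) (hπ : permList k π)
    (hne : σ ≠ π) : 3 ≤ dK (codeword k σ) (codeword k π) :=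
  (three_le_invDist_codeword hσ hπ hne).trans <|
    invDist_le_dK _ (nodup_of_permList (permList_codeword hσ)) <|
      (permList_iff_perm.1 (permList_codeword hσ)).trans
        (permList_iff_perm.1 (permList_codeword hπ)).symm

lemma ncard_permList (k : ℕ) : {σ | permList k σ}.ncard = k.factorial := by
  have hset : {σ | permList k σ} = ((rangeList 1 k).permutations.toFinset : Set (List ℤ)) := by
    ext σ
    simp [permList_iff_perm]
  rw [hset, Set.ncard_coe_finset, List.toFinset_card_of_nodup
    (List.nodup_permutations _ (nodup_rangeList 1 k)), List.length_permutations]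
  simp [rangeList_eq_map]

theorem stmt15_general (k : ℕ) :
    ∃ C : Set (List ℤ),
      (∀ α ∈ C, permList (k + 2) α) ∧
      C.ncard = Nat.factorial k ∧
      (∀ σ : List ℤ, permList k σ → ∃! α, α ∈ C ∧ restrictTo k α = σ) ∧
      (∀ α ∈ C, ∀ β ∈ C, α ≠ β → 3 ≤ dK α β) := by
  have hinj : Set.InjOn (codeword k) {σ | permList k σ} := fun σ hσ π hπ h => by
    rw [← restrictTo_codeword hσ, h, restrictTo_codeword hπ]
  refine ⟨codeword k '' {σ | permList k σ}, ?_, ?_, fun σ hσ => ?_, ?_⟩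
  · rintro _ ⟨σ, hσ, rfl⟩
    exact permList_codeword hσ
  · rw [hinj.ncard_image, ncard_permList]
  · refine ⟨codeword k σ, ⟨Set.mem_image_of_mem _ hσ, restrictTo_codeword hσ⟩, ?_⟩
    rintro _ ⟨⟨π, hπ, rfl⟩, hres⟩
    rw [← restrictTo_codeword hπ, hres]
  · rintro _ ⟨σ, hσ, rfl⟩ _ ⟨π, hπ, rfl⟩ hne
    exact three_le_dK_codeword hσ hπ (ne_of_apply_ne _ hne)

/-- Example 3. For every integer `k ≥ 1` there exists a `(k+2, k)`
systematic single-error-correcting code: a code `C ⊆ S_{k+2}` of size `k!` such that every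
`σ ∈ S_k` is the restriction of exactly one codeword of `C`, and distinct codewords of `C`
are at Kendall τ-distance at least `3`. -/
theorem stmt15 (k : ℕ) (hk : 1 ≤ k) :
    ∃ C : Set (List ℤ),
      (∀ α ∈ C, permList (k + 2) α) ∧
      C.ncard = Nat.factorial k ∧
      (∀ σ : List ℤ, permList k σ → ∃! α, α ∈ C ∧ restrictTo k α = σ) ∧
      (∀ α ∈ C, ∀ β ∈ C, α ≠ β → 3 ≤ dK α β) :=
  stmt15_general k
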